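/- For α > 0 and k ∈ ℝ with k ≠ 1 (more precisely, whenever the formula's Gamma values make sense), the derivative of z ↦ z^{k−1} E_{α,k}(λ z^α) on (0,∞) equals z^{k−2} E_{α,k−1}(λ z^α). -/

import Mathlib

/-!
Differentiate the series termwise. With `p = α n + k - 1`, the `n`-th term is
`lam ^ n * z ^ p / Γ(p + 1)`, whose derivative is `lam ^ n * z ^ (p - 1) / Γ(p)` because
`p / Γ(p + 1) = 1 / Γ(p)`; this identity also holds at the poles of `Γ`, where both sides vanish.
Termwise differentiation is justified on `(z / 2, 2 z)` by comparison with the series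
`∑ R ^ n / |Γ(α n + β)|`, which converges by the ratio test since log-convexity of `Γ` gives
`Γ(x + α) / Γ(x) ≥ (x - 1) ^ α → ∞`.
-/

/-- Two-parameter Mittag-Leffler function (with the `1/Γ = 0` convention at poles,
automatic since `Real.Gamma` vanishes at nonpositive integers). -/
noncomputable def mittagLeffler (α β z : ℝ) : ℝ :=
  ∑' k : ℕ, z ^ k / Real.Gamma (α * k + β)

open Real Filter Set

namespace Real

theorem inv_Gamma_eq_self_mul_inv_Gamma_add_one (s : ℝ) :
    (Gamma s)⁻¹ = s * (Gamma (s + 1))⁻¹ := by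
  rcases ne_or_eq s 0 with h | rfl
  · rw [Gamma_add_one h, mul_inv, mul_inv_cancel_left₀ h]
  · rw [zero_add, Gamma_zero, inv_zero, zero_mul]

theorem hasDerivAt_rpow_div_Gamma_add_one {p y : ℝ} (hy : y ≠ 0 ∨ 1 ≤ p) :
    HasDerivAt (fun y => y ^ p / Gamma (p + 1)) (y ^ (p - 1) / Gamma p) y := by
  refine ((hasDerivAt_rpow_const hy).div_const (Gamma (p + 1))).congr_deriv ?_
  rw [div_eq_mul_inv, div_eq_mul_inv, inv_Gamma_eq_self_mul_inv_Gamma_add_one p]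
  ring

theorem rpow_sub_one_le_Gamma_add_div_Gamma {x α : ℝ} (hx : 1 < x) (hα : 0 < α) :
    (x - 1) ^ α ≤ Gamma (x + α) / Gamma x := by
  have hx1 : 0 < x - 1 := by linarith
  have hΓx : 0 < Gamma x := Gamma_pos_of_pos (by linarith)
  have hΓxα : 0 < Gamma (x + α) := Gamma_pos_of_pos (by linarith)
  have hslope := convexOn_log_Gamma.slope_mono_adjacent (x := x - 1) (y := x) (z := x + α)
    hx1 (by simp only [mem_Ioi]; linarith) (by linarith) (by linarith)
  have hlog : log (Gamma x) - log (Gamma (x - 1)) = log (x - 1) := by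
    rw [show Gamma x = (x - 1) * Gamma (x - 1) by simpa using Gamma_add_one hx1.ne',
      log_mul hx1.ne' (Gamma_pos_of_pos hx1).ne']
    ring
  simp only [Function.comp_apply, sub_sub_cancel, add_sub_cancel_left, div_one, hlog] at hslope
  rw [rpow_def_of_pos hx1, ← exp_log (div_pos hΓxα hΓx), log_div hΓxα.ne' hΓx.ne',
    exp_le_exp]
  rwa [le_div_iff₀ hα] at hslope

theorem tendsto_Gamma_add_div_Gamma_atTop {α : ℝ} (hα : 0 < α) :
    Tendsto (fun x => Gamma (x + α) / Gamma x) atTop atTop := by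
  refine tendsto_atTop_mono' atTop ?_
    ((tendsto_rpow_atTop hα).comp (tendsto_atTop_add_const_right atTop (-1) tendsto_id))
  filter_upwards [eventually_gt_atTop 1] with x hx
  simpa [sub_eq_add_neg] using rpow_sub_one_le_Gamma_add_div_Gamma hx hα

theorem rpow_mul_mul_rpow_pow {y : ℝ} (hy : 0 < y) (c lam α : ℝ) (n : ℕ) :
    y ^ c * (lam * y ^ α) ^ n = lam ^ n * y ^ (α * n + c) := by
  rw [mul_pow, ← rpow_natCast (y ^ α), ← rpow_mul hy.le, rpow_add hy]
  ring

end Real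

theorem summable_mittagLeffler {α : ℝ} (hα : 0 < α) (β z : ℝ) :
    Summable fun n : ℕ => z ^ n / Gamma (α * n + β) := by
  refine summable_of_ratio_norm_eventually_le one_half_lt_one ?_
  have harg : Tendsto (fun n : ℕ => α * n + β) atTop atTop :=
    tendsto_atTop_add_const_right _ β (tendsto_natCast_atTop_atTop.const_mul_atTop hα)
  have hgrowth := (tendsto_Gamma_add_div_Gamma_atTop hα).eventually_ge_atTop (2 * ‖z‖)
  filter_upwards [harg.eventually hgrowth, harg.eventually_gt_atTop 0] with n hratio hpos
  have hΓ := Gamma_pos_of_pos hpos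
  have hΓ' := Gamma_pos_of_pos (show 0 < α * n + β + α by linarith)
  rw [le_div_iff₀ hΓ] at hratio
  rw [show α * ((n + 1 : ℕ) : ℝ) + β = α * n + β + α by push_cast; ring,
    norm_div, norm_div, norm_pow, norm_pow, norm_of_nonneg hΓ'.le, norm_of_nonneg hΓ.le,
    div_le_iff₀ hΓ', pow_succ]
  calc ‖z‖ ^ n * ‖z‖
      = 1 / 2 * (‖z‖ ^ n / Gamma (α * n + β)) * (2 * ‖z‖ * Gamma (α * n + β)) := by
        field_simp
    _ ≤ _ := by gcongr

theorem hasDerivAt_rpow_mul_mittagLeffler_term (α β lam : ℝ) (n : ℕ) {y : ℝ} (hy : 0 < y) :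
    HasDerivAt (fun y => y ^ (β - 1) * ((lam * y ^ α) ^ n / Gamma (α * n + β)))
      (y ^ (β - 2) * ((lam * y ^ α) ^ n / Gamma (α * n + (β - 1)))) y := by
  have hterm : (fun y => y ^ (β - 1) * ((lam * y ^ α) ^ n / Gamma (α * n + β))) =ᶠ[nhds y]
      fun y => lam ^ n * (y ^ (α * n + (β - 1)) / Gamma (α * n + (β - 1) + 1)) := by
    filter_upwards [Ioi_mem_nhds hy] with w hw
    rw [← mul_div_assoc, rpow_mul_mul_rpow_pow hw, mul_div_assoc,
      show α * n + (β - 1) + 1 = α * n + β by ring]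
  refine (((hasDerivAt_rpow_div_Gamma_add_one (Or.inl hy.ne')).const_mul (lam ^ n))
    |>.congr_of_eventuallyEq hterm).congr_deriv ?_
  rw [← mul_div_assoc, ← mul_div_assoc (y ^ (β - 2)), rpow_mul_mul_rpow_pow hy]
  ring_nf

theorem deriv_rpow_mul_mittagLeffler_general (α k lam : ℝ) (hα : 0 < α)
    (z : ℝ) (hz : 0 < z) :
    HasDerivAt (fun z : ℝ => z ^ (k - 1) * mittagLeffler α k (lam * z ^ α))
      (z ^ (k - 2) * mittagLeffler α (k - 1) (lam * z ^ α)) z := by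
  have hzt : z ∈ Ioo (z / 2) (2 * z) := ⟨by linarith, by linarith⟩
  have hne : ∀ y ∈ Icc (z / 2) (2 * z), y ≠ 0 := fun y hy => (by linarith [hy.1] : 0 < y).ne'
  obtain ⟨M, hM⟩ := isCompact_Icc.exists_bound_of_continuousOn
    (continuousOn_id.rpow_const fun y hy => Or.inl (hne y hy) : ContinuousOn (· ^ (k - 2)) _)
  obtain ⟨R, hR⟩ := isCompact_Icc.exists_bound_of_continuousOn
    ((continuousOn_id.rpow_const fun y hy => Or.inl (hne y hy)).const_smul lam :
      ContinuousOn (fun y => lam * y ^ α) _)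
  have hbound : ∀ (n : ℕ), ∀ y ∈ Ioo (z / 2) (2 * z),
      ‖y ^ (k - 2) * ((lam * y ^ α) ^ n / Gamma (α * n + (k - 1)))‖ ≤
        M * |R ^ n / Gamma (α * n + (k - 1))| := by
    intro n y hy
    have hy' := Ioo_subset_Icc_self hy
    have hR0 : 0 ≤ R := (norm_nonneg _).trans (hR y hy')
    rw [norm_mul, norm_div, norm_pow, abs_div, abs_pow, abs_of_nonneg hR0, ← norm_eq_abs]
    gcongr
    exacts [(norm_nonneg _).trans (hM y hy'), hM y hy', hR y hy']
  have hderiv := hasDerivAt_tsum_of_isPreconnected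
    ((summable_mittagLeffler hα (k - 1) R).abs.mul_left M) isOpen_Ioo isPreconnected_Ioo
    (fun n y hy => hasDerivAt_rpow_mul_mittagLeffler_term α k lam n (by linarith [hy.1]))
    hbound hzt ((summable_mittagLeffler hα k (lam * z ^ α)).mul_left _) hzt
  simpa only [mittagLeffler, tsum_mul_left] using hderiv

theorem deriv_rpow_mul_mittagLeffler (α k lam : ℝ) (hα : 0 < α) (hk : k ≠ 1)
    (z : ℝ) (hz : 0 < z) :
    HasDerivAt (fun z : ℝ => z ^ (k - 1) * mittagLeffler α k (lam * z ^ α))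
      (z ^ (k - 2) * mittagLeffler α (k - 1) (lam * z ^ α)) z :=
  deriv_rpow_mul_mittagLeffler_general α k lam hα z hz
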